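/- For every n ≥ 4, the graph G on n vertices obtained from a cycle v₁v₂⋯v_{n−1}v₁ on n − 1 vertices by adding a new vertex x joined to v₁ and v₂ is 2-connected, has exactly n + 1 edges, and satisfies rc₂(G) ≤ n − 1. -/

import Mathlib

/-!
Index the cycle as `w 0, …, w m` with `m = n - 2` and the apex `x` as `w (m + 1)`. Colour the
cycle edge `w k w (k + 1)` with `k`, the closing edge `w m w 0` and the edge `x w 1` with `m`, and
`x w 0` with `1`: these are the `n - 1` colours `0, …, m`. The cycle is rainbow, so two cycle
vertices are joined by its two arcs. The apex reaches `w 0` and `w 1` directly and around the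
triangle `x w 0 w 1`, and reaches `w a` with `a ≥ 2` along `x w 1 w 2 ⋯ w a` (colours
`m, 1, …, a - 1`) and along `x w 0 w m ⋯ w a` (colours `1, m, m - 1, …, a`). Deleting a vertex
leaves the rest of the cycle connected, and the apex keeps one of its two neighbours.
-/

open SimpleGraph

/-- A walk is rainbow (w.r.t. an edge-colouring `col`) if its edges receive
pairwise distinct colours. -/
def IsRainbowWalk {V α : Type*} {G : SimpleGraph V} {u v : V} (col : Sym2 V → α)
    (p : G.Walk u v) : Prop :=
  (p.edges.map col).Nodup

/-- An edge-colouring is rainbow 2-connected if every two distinct vertices are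
connected by two internally vertex-disjoint rainbow paths. -/
def RainbowTwoConnectedColouring {V α : Type*} (G : SimpleGraph V) (col : Sym2 V → α) : Prop :=
  ∀ u v : V, u ≠ v → ∃ p q : G.Walk u v, p.IsPath ∧ q.IsPath ∧ p ≠ q ∧
    IsRainbowWalk col p ∧ IsRainbowWalk col q ∧
    ∀ w : V, w ∈ p.support → w ∈ q.support → w = u ∨ w = v

/-- The rainbow 2-connection number: the least number of colours in a rainbow
2-connected colouring. -/
noncomputable def rc2 {V : Type*} (G : SimpleGraph V) : ℕ :=
  sInf {r : ℕ | ∃ col : Sym2 V → Fin r, RainbowTwoConnectedColouring G col}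

/-- A graph is 2-connected if it has at least 3 vertices and deleting any single
vertex leaves a connected graph. -/
def TwoConnected {V : Type*} [Fintype V] (G : SimpleGraph V) : Prop :=
  3 ≤ Fintype.card V ∧ ∀ v : V, (G.induce ({v}ᶜ : Set V)).Connected

/-- `t2 n r`: minimum number of edges of a 2-connected graph on `n` vertices
with rainbow 2-connection number at most `r`. -/
noncomputable def t2 (n r : ℕ) : ℕ :=
  sInf {m : ℕ | ∃ G : SimpleGraph (Fin n), TwoConnected G ∧ rc2 G ≤ r ∧ G.edgeSet.ncard = m}

/-- `s2 n r`: maximum number of edges of a 2-connected graph on `n` vertices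
with rainbow 2-connection number at least `r`. -/
noncomputable def s2 (n r : ℕ) : ℕ :=
  sSup {m : ℕ | ∃ G : SimpleGraph (Fin n), TwoConnected G ∧ r ≤ rc2 G ∧ G.edgeSet.ncard = m}

section

variable {V α : Type*} {G : SimpleGraph V} {col : Sym2 V → α} {u v : V}

def RainbowTwoLinked (G : SimpleGraph V) (col : Sym2 V → α) (u v : V) : Prop :=
  ∃ p q : G.Walk u v, p.IsPath ∧ q.IsPath ∧ p ≠ q ∧
    IsRainbowWalk col p ∧ IsRainbowWalk col q ∧ ∀ z ∈ p.support, z ∈ q.support → z = u ∨ z = v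

lemma isRainbowWalk_reverse {p : G.Walk u v} :
    IsRainbowWalk col p.reverse ↔ IsRainbowWalk col p := by
  simp [IsRainbowWalk, Walk.edges_reverse, List.map_reverse]

lemma RainbowTwoLinked.symm (h : RainbowTwoLinked G col u v) : RainbowTwoLinked G col v u := by
  obtain ⟨p, q, hp, hq, hpq, hrp, hrq, hpq_int⟩ := h
  refine ⟨p.reverse, q.reverse, hp.reverse, hq.reverse, Walk.reverse_injective.ne hpq,
    isRainbowWalk_reverse.2 hrp, isRainbowWalk_reverse.2 hrq, fun z hzp hzq => ?_⟩
  rw [Walk.support_reverse, List.mem_reverse] at hzp hzq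
  exact (hpq_int z hzp hzq).symm

lemma rainbowTwoLinked_of_triangle {c : V} (huv : G.Adj u v) (huc : G.Adj u c) (hcv : G.Adj c v)
    (hcol : col s(u, c) ≠ col s(c, v)) : RainbowTwoLinked G col u v := by
  refine ⟨huv.toWalk, .cons huc hcv.toWalk, huv.isPath_toWalk, ?_, fun h => ?_, ?_, ?_, ?_⟩
  · simpa [Walk.cons_isPath_iff, hcv.isPath_toWalk] using ⟨huc.ne, huv.ne⟩
  · simpa using congrArg Walk.length h
  · simp [IsRainbowWalk]
  · simpa [IsRainbowWalk] using hcol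
  · simp

lemma IsRainbowWalk.finOfNat {r : ℕ} [NeZero r] {col : Sym2 V → ℕ} {p : G.Walk u v}
    (hp : IsRainbowWalk col p) (hlt : ∀ e ∈ G.edgeSet, col e < r) :
    IsRainbowWalk (fun e => Fin.ofNat r (col e)) p := by
  have hlt' : ∀ c ∈ p.edges.map col, c < r := by
    simp only [List.mem_map]
    rintro _ ⟨e, he, rfl⟩
    exact hlt e (p.edges_subset_edgeSet he)
  have := hp.map_on (f := Fin.ofNat r) fun a ha b hb hab => by
    simpa [Fin.ext_iff, Nat.mod_eq_of_lt (hlt' a ha), Nat.mod_eq_of_lt (hlt' b hb)] using hab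
  rw [List.map_map] at this
  exact this

lemma rc2_le_of_natColouring {r : ℕ} [NeZero r] {col : Sym2 V → ℕ}
    (hcol : RainbowTwoConnectedColouring G col) (hlt : ∀ e ∈ G.edgeSet, col e < r) :
    rc2 G ≤ r := by
  refine Nat.sInf_le ⟨fun e => Fin.ofNat r (col e), fun u v huv => ?_⟩
  obtain ⟨p, q, hp, hq, hpq, hrp, hrq, hpq_int⟩ := hcol u v huv
  exact ⟨p, q, hp, hq, hpq, hrp.finOfNat hlt, hrq.finOfNat hlt, hpq_int⟩

lemma induce_connected_of_walks {s : Set V} (hu : u ∈ s)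
    (h : ∀ v ∈ s, ∃ p : G.Walk u v, ∀ z ∈ p.support, z ∈ s) : (G.induce s).Connected :=
  (connected_iff_exists_forall_reachable _).2 ⟨⟨u, hu⟩, fun ⟨v, hv⟩ =>
    let ⟨p, hp⟩ := h v hv; ⟨p.induce s hp⟩⟩

lemma Set.InjOn.sym2_map {β : Type*} {f : α → β} {s : Set α} (hf : Set.InjOn f s) :
    Set.InjOn (Sym2.map f) {e | ∀ a ∈ e, a ∈ s} := by
  intro e he e' he' h
  induction e using Sym2.ind with | h a b => ?_
  induction e' using Sym2.ind with | h c d => ?_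
  simp only [Set.mem_ofPred_eq, Sym2.mem_iff, forall_eq_or_imp, forall_eq] at he he'
  simp only [Sym2.map_mk, Sym2.eq_iff] at h ⊢
  rcases h with ⟨hac, hbd⟩ | ⟨had, hbc⟩
  · exact Or.inl ⟨hf he.1 he'.1 hac, hf he.2 he'.2 hbd⟩
  · exact Or.inr ⟨hf he.1 he'.2 had, hf he.2 he'.1 hbc⟩

lemma Set.InjOn.surjOn_univ_of_card [Fintype V] {f : ℕ → V} {N : ℕ}
    (hf : Set.InjOn f (Set.Iic N)) (hcard : Fintype.card V = N + 1) :
    Set.SurjOn f (Set.Iic N) Set.univ := by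
  refine (Set.eq_of_subset_of_ncard_le (Set.subset_univ _) ?_).symm.subset
  rw [Set.ncard_univ, Nat.card_eq_fintype_card, hf.ncard_image, Set.ncard_Iic_nat, hcard]

section IndexedWalks

variable {w : ℕ → V} {N : ℕ}

lemma mem_map_iff_of_injOn (hw : Set.InjOn w (Set.Iic N)) {L : List ℕ}
    (hL : ∀ t ∈ L, t ≤ N) {t : ℕ} (ht : t ≤ N) : w t ∈ L.map w ↔ t ∈ L := by
  refine ⟨fun h => ?_, List.mem_map_of_mem⟩
  obtain ⟨s, hs, hst⟩ := List.mem_map.1 h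
  rwa [← hw (hL s hs) ht hst]

lemma rainbowTwoLinked_of_indices (hw : Set.InjOn w (Set.Iic N)) {a b : ℕ}
    {p q : G.Walk (w a) (w b)} {L₁ L₂ : List ℕ}
    (hp : p.support = L₁.map w) (hq : q.support = L₂.map w)
    (hL₁N : ∀ t ∈ L₁, t ≤ N) (hL₂N : ∀ t ∈ L₂, t ≤ N) (hL₁ : L₁.Nodup) (hL₂ : L₂.Nodup)
    (hL : ∀ t ∈ L₁, t ∈ L₂ → t = a ∨ t = b)
    (hrp : IsRainbowWalk col p) (hrq : IsRainbowWalk col q)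
    (hpq : p.edges.map col ≠ q.edges.map col) :
    RainbowTwoLinked G col (w a) (w b) := by
  refine ⟨p, q, ?_, ?_, fun h => hpq (h ▸ rfl), hrp, hrq, fun z hzp hzq => ?_⟩
  · rw [Walk.isPath_def, hp]
    exact hL₁.map_on fun s hs t ht h => hw (hL₁N s hs) (hL₁N t ht) h
  · rw [Walk.isPath_def, hq]
    exact hL₂.map_on fun s hs t ht h => hw (hL₂N s hs) (hL₂N t ht) h
  rw [hp] at hzp
  rw [hq] at hzq
  obtain ⟨t, ht, rfl⟩ := List.mem_map.1 hzp
  rcases hL t ht ((mem_map_iff_of_injOn hw hL₂N (hL₁N t ht)).1 hzq) with rfl | rfl <;> simp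

lemma ne_of_mem_map_of_injOn (hw : Set.InjOn w (Set.Iic N)) {L : List ℕ} {r : ℕ}
    (hL : ∀ t ∈ L, t ≤ N ∧ t ≠ r) (hr : r ≤ N) : ∀ z ∈ L.map w, z ≠ w r := by
  rintro _ hz rfl
  exact (hL r ((mem_map_iff_of_injOn hw (fun t ht => (hL t ht).1) hr).1 hz)).2 rfl

def chainWalk (w : ℕ → V) (i : ℕ) :
    (k : ℕ) → (∀ t < k, G.Adj (w (i + t)) (w (i + t + 1))) → G.Walk (w i) (w (i + k))
  | 0, _ => .nil
  | k + 1, h => (chainWalk w i k fun t ht => h t (by omega)).concat (h k (by omega))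

lemma support_chainWalk (i : ℕ) :
    ∀ (k : ℕ) (h : ∀ t < k, G.Adj (w (i + t)) (w (i + t + 1))),
      (chainWalk w i k h).support = (List.range' i (k + 1)).map w
  | 0, _ => rfl
  | k + 1, h => by
    rw [chainWalk, Walk.support_concat, support_chainWalk i k, List.range'_1_concat (n := k + 1)]
    simp

lemma edges_chainWalk (i : ℕ) :
    ∀ (k : ℕ) (h : ∀ t < k, G.Adj (w (i + t)) (w (i + t + 1))),
      (chainWalk w i k h).edges = (List.range' i k).map fun t => s(w t, w (t + 1))
  | 0, _ => rfl
  | k + 1, h => by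
    rw [chainWalk, Walk.edges_concat, edges_chainWalk i k, List.range'_1_concat]
    simp [add_assoc]

end IndexedWalks

def earEdges (m : ℕ) : Finset (Sym2 ℕ) :=
  (Finset.range m).image (fun k => s(k, k + 1)) ∪ {s(m, 0), s(m + 1, 0), s(m + 1, 1)}

lemma card_earEdges {m : ℕ} (hm : 2 ≤ m) : (earEdges m).card = m + 3 := by
  rw [earEdges, Finset.card_union_of_disjoint, Finset.card_image_of_injective, Finset.card_range]
  · rw [Finset.card_insert_of_notMem, Finset.card_pair] <;> simp
  · intro a b h
    simp only [Sym2.eq_iff] at h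
    omega
  · simp [Finset.disjoint_left]
    omega

lemma le_of_mem_earEdges {m : ℕ} {e : Sym2 ℕ} (he : e ∈ earEdges m) : ∀ t ∈ e, t ≤ m + 1 := by
  simp only [earEdges, Finset.mem_union, Finset.mem_image, Finset.mem_range, Finset.mem_insert,
    Finset.mem_singleton] at he
  rcases he with ⟨k, hk, rfl⟩ | rfl | rfl | rfl <;> simp
  omega

lemma mem_map_earEdges_iff {w : ℕ → V} {m : ℕ} {a b : V} :
    s(a, b) ∈ Sym2.map w '' earEdges m ↔
      (∃ k < m, s(a, b) = s(w k, w (k + 1))) ∨ s(a, b) = s(w m, w 0) ∨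
        s(a, b) = s(w (m + 1), w 0) ∨ s(a, b) = s(w (m + 1), w 1) := by
  simp only [earEdges, Finset.coe_union, Finset.coe_image, Finset.coe_range, Finset.coe_insert,
    Finset.coe_singleton, Set.image_union, Set.image_image, Set.image_insert_eq,
    Set.image_singleton, Set.mem_union, Set.mem_image, Set.mem_Iio, Set.mem_insert_iff,
    Set.mem_singleton_iff, Sym2.map_mk]
  exact or_congr_left (exists_congr fun k => and_congr_right fun _ => eq_comm)

def earColour (m : ℕ) (e : Sym2 ℕ) : ℕ :=
  if e = s(m + 1, 0) then 1 else if e = s(m + 1, 1) ∨ e = s(m, 0) then m else e.inf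

section EarColour

variable {m : ℕ}

lemma earColour_succ (hm : 2 ≤ m) {k : ℕ} (hk : k < m) : earColour m s(k, k + 1) = k := by
  rw [earColour, if_neg, if_neg] <;> simp <;> omega

lemma earColour_last_zero : earColour m s(m, 0) = m := by
  rw [earColour, if_neg, if_pos (Or.inr rfl)]
  simp

lemma earColour_apex_zero : earColour m s(m + 1, 0) = 1 := if_pos rfl

lemma earColour_apex_one : earColour m s(m + 1, 1) = m := by
  rw [earColour, if_neg, if_pos (Or.inl rfl)]
  simp

lemma earColour_le (hm : 2 ≤ m) {e : Sym2 ℕ} (he : e ∈ earEdges m) : earColour m e ≤ m := by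
  simp only [earEdges, Finset.mem_union, Finset.mem_image, Finset.mem_range, Finset.mem_insert,
    Finset.mem_singleton] at he
  rcases he with ⟨k, hk, rfl⟩ | rfl | rfl | rfl
  · rw [earColour_succ hm hk]; omega
  · rw [earColour_last_zero]
  · rw [earColour_apex_zero]; omega
  · rw [earColour_apex_one]

end EarColour

/-- The cycle `v₁ ⋯ v_{n-1}` of the paper is `w 0 ⋯ w m` and its apex `x` is `w (m + 1)`. -/
structure IsEaredCycle (G : SimpleGraph V) (m : ℕ) (w : ℕ → V) : Prop where
  bijOn : Set.BijOn w (Set.Iic (m + 1)) Set.univ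
  edgeSet_eq : G.edgeSet = Sym2.map w '' earEdges m

noncomputable def earColouring (m : ℕ) (w : ℕ → V) (e : Sym2 V) : ℕ :=
  earColour m (e.map (Function.invFunOn w (Set.Iic (m + 1))))

namespace IsEaredCycle

variable {m : ℕ} {w : ℕ → V}

lemma adj (hG : IsEaredCycle G m w) {a b : ℕ} (h : s(a, b) ∈ earEdges m) : G.Adj (w a) (w b) := by
  rw [← mem_edgeSet, hG.edgeSet_eq]
  exact ⟨_, h, rfl⟩

lemma adj_succ (hG : IsEaredCycle G m w) {k : ℕ} (hk : k < m) : G.Adj (w k) (w (k + 1)) :=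
  hG.adj (Finset.mem_union_left _ (Finset.mem_image_of_mem _ (Finset.mem_range.2 hk)))

lemma adj_last_zero (hG : IsEaredCycle G m w) : G.Adj (w m) (w 0) :=
  hG.adj (by simp [earEdges])

lemma adj_apex_zero (hG : IsEaredCycle G m w) : G.Adj (w (m + 1)) (w 0) :=
  hG.adj (by simp [earEdges])

lemma adj_apex_one (hG : IsEaredCycle G m w) : G.Adj (w (m + 1)) (w 1) :=
  hG.adj (by simp [earEdges])

lemma ncard_edgeSet (hG : IsEaredCycle G m w) (hm : 2 ≤ m) : G.edgeSet.ncard = m + 3 := by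
  rw [hG.edgeSet_eq, Set.InjOn.ncard_image, Set.ncard_coe_finset, card_earEdges hm]
  exact hG.bijOn.injOn.sym2_map.mono fun e he => le_of_mem_earEdges he

def arc (hG : IsEaredCycle G m w) (i j : ℕ) (hij : i ≤ j) (hj : j ≤ m) : G.Walk (w i) (w j) :=
  (chainWalk w i (j - i) fun _ _ => hG.adj_succ (by omega)).copy rfl
    (by rw [Nat.add_sub_cancel' hij])

lemma support_arc (hG : IsEaredCycle G m w) {i j : ℕ} (hij : i ≤ j) (hj : j ≤ m) :
    (hG.arc i j hij hj).support = (List.range' i (j - i + 1)).map w := by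
  rw [arc, Walk.support_copy, support_chainWalk]

lemma edges_arc (hG : IsEaredCycle G m w) {i j : ℕ} (hij : i ≤ j) (hj : j ≤ m) :
    (hG.arc i j hij hj).edges = (List.range' i (j - i)).map fun t => s(w t, w (t + 1)) := by
  rw [arc, Walk.edges_copy, edges_chainWalk]

lemma earColouring_mk (hG : IsEaredCycle G m w) {a b : ℕ} (ha : a ≤ m + 1) (hb : b ≤ m + 1) :
    earColouring m w s(w a, w b) = earColour m s(a, b) := by
  have hinv := hG.bijOn.injOn.leftInvOn_invFunOn
  rw [earColouring, Sym2.map_mk, hinv ha, hinv hb]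

lemma map_edges_arc (hG : IsEaredCycle G m w) (hm : 2 ≤ m) {i j : ℕ} (hij : i ≤ j) (hj : j ≤ m) :
    (hG.arc i j hij hj).edges.map (earColouring m w) = List.range' i (j - i) := by
  rw [edges_arc, List.map_map]
  refine (List.map_congr_left fun t ht => ?_).trans (List.map_id _)
  rw [List.mem_range'_1] at ht
  simp only [Function.comp_apply, id]
  rw [hG.earColouring_mk (by omega) (by omega), earColour_succ hm (by omega)]

lemma earColouring_last_zero (hG : IsEaredCycle G m w) : earColouring m w s(w 0, w m) = m := by
  rw [hG.earColouring_mk (by omega) (by omega), Sym2.eq_swap, earColour_last_zero]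

lemma earColouring_apex_zero (hG : IsEaredCycle G m w) :
    earColouring m w s(w (m + 1), w 0) = 1 := by
  rw [hG.earColouring_mk le_rfl (by omega), earColour_apex_zero]

lemma earColouring_apex_one (hG : IsEaredCycle G m w) :
    earColouring m w s(w (m + 1), w 1) = m := by
  rw [hG.earColouring_mk le_rfl (by omega), earColour_apex_one]

lemma earColouring_one_zero (hG : IsEaredCycle G m w) (hm : 2 ≤ m) :
    earColouring m w s(w 1, w 0) = 0 := by
  rw [hG.earColouring_mk (by omega) (by omega), Sym2.eq_swap, earColour_succ hm (by omega)]

lemma rainbowTwoLinked_cycle (hG : IsEaredCycle G m w) (hm : 2 ≤ m) {a b : ℕ} (hab : a < b)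
    (hb : b ≤ m) : RainbowTwoLinked G (earColouring m w) (w a) (w b) := by
  set p := hG.arc a b hab.le hb
  set q := (hG.arc 0 a (Nat.zero_le a) (by omega)).reverse.append
    (.cons hG.adj_last_zero.symm (hG.arc b m hb le_rfl).reverse)
  have hcp : p.edges.map (earColouring m w) = List.range' a (b - a) := hG.map_edges_arc hm _ _
  have hcq : q.edges.map (earColouring m w) =
      (List.range' 0 a).reverse ++ m :: (List.range' b (m - b)).reverse := by
    simp only [q, Walk.edges_append, Walk.edges_reverse, Walk.edges_cons, List.map_append,
      List.map_cons, List.map_reverse, hG.map_edges_arc hm, hG.earColouring_last_zero,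
      Nat.sub_zero]
  have hsq : q.support =
      ((List.range' 0 (a + 1)).reverse ++ (List.range' b (m - b + 1)).reverse).map w := by
    simp only [q, Walk.support_append, Walk.support_reverse, Walk.support_cons, List.tail_cons,
      hG.support_arc, List.map_append, List.map_reverse, Nat.sub_zero]
  refine rainbowTwoLinked_of_indices hG.bijOn.injOn (hG.support_arc hab.le hb) hsq
    ?_ ?_ List.nodup_range' ?_ ?_ ?_ ?_ ?_
  · simp
    omega
  · simp
    omega
  · simp [List.nodup_append, List.nodup_range']
    omega
  · simp
    intros
    omega
  · rw [IsRainbowWalk, hcp]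
    exact List.nodup_range'
  · rw [IsRainbowWalk, hcq]
    simp [List.nodup_append, List.nodup_range']
    grind
  · rw [hcp, hcq]
    intro h
    have : m ∈ List.range' a (b - a) := h ▸ by simp
    simp at this
    omega

lemma rainbowTwoLinked_apex_of_two_le (hG : IsEaredCycle G m w) (hm : 2 ≤ m) {a : ℕ}
    (ha₂ : 2 ≤ a) (ha : a ≤ m) : RainbowTwoLinked G (earColouring m w) (w (m + 1)) (w a) := by
  set p := Walk.cons hG.adj_apex_zero (.cons hG.adj_last_zero.symm (hG.arc a m ha le_rfl).reverse)
  set q := Walk.cons hG.adj_apex_one (hG.arc 1 a (by omega) ha)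
  have hcp : p.edges.map (earColouring m w) = 1 :: m :: (List.range' a (m - a)).reverse := by
    simp only [p, Walk.edges_cons, Walk.edges_reverse, List.map_cons, List.map_reverse,
      hG.map_edges_arc hm, hG.earColouring_apex_zero, hG.earColouring_last_zero]
  have hcq : q.edges.map (earColouring m w) = m :: List.range' 1 (a - 1) := by
    simp only [q, Walk.edges_cons, List.map_cons, hG.map_edges_arc hm, hG.earColouring_apex_one]
  have hsp : p.support = ((m + 1) :: 0 :: (List.range' a (m - a + 1)).reverse).map w := by
    simp only [p, Walk.support_cons, Walk.support_reverse, hG.support_arc, List.map_cons,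
      List.map_reverse]
  have hsq : q.support = ((m + 1) :: List.range' 1 (a - 1 + 1)).map w := by
    simp only [q, Walk.support_cons, hG.support_arc, List.map_cons]
  refine rainbowTwoLinked_of_indices hG.bijOn.injOn hsp hsq ?_ ?_ ?_ ?_ ?_ ?_ ?_ ?_
  · simp
    omega
  · simp
    omega
  · simp [List.nodup_range']
    omega
  · simp [List.nodup_range']
    omega
  · simp
    omega
  · rw [IsRainbowWalk, hcp]
    simp [List.nodup_range']
    omega
  · rw [IsRainbowWalk, hcq]
    simp [List.nodup_range']
    omega
  · rw [hcp, hcq]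
    simp
    omega

lemma rainbowTwoLinked_apex (hG : IsEaredCycle G m w) (hm : 2 ≤ m) {a : ℕ} (ha : a ≤ m) :
    RainbowTwoLinked G (earColouring m w) (w (m + 1)) (w a) := by
  rcases (by omega : a = 0 ∨ a = 1 ∨ 2 ≤ a) with rfl | rfl | ha₂
  · refine rainbowTwoLinked_of_triangle hG.adj_apex_zero hG.adj_apex_one
      (hG.adj_succ (by omega)).symm ?_
    rw [hG.earColouring_apex_one, hG.earColouring_one_zero hm]
    omega
  · refine rainbowTwoLinked_of_triangle hG.adj_apex_one hG.adj_apex_zero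
      (hG.adj_succ (by omega)) ?_
    rw [hG.earColouring_apex_zero, Sym2.eq_swap, hG.earColouring_one_zero hm]
    omega
  · exact hG.rainbowTwoLinked_apex_of_two_le hm ha₂ ha

lemma rainbowTwoConnectedColouring (hG : IsEaredCycle G m w) (hm : 2 ≤ m) :
    RainbowTwoConnectedColouring G (earColouring m w) := by
  have hlt : ∀ a b, a < b → b ≤ m + 1 → RainbowTwoLinked G (earColouring m w) (w a) (w b) := by
    intro a b hab hb
    rcases hb.lt_or_eq with hb | rfl
    · exact hG.rainbowTwoLinked_cycle hm hab (by omega)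
    · exact (hG.rainbowTwoLinked_apex hm (by omega)).symm
  intro u v huv
  obtain ⟨a, ha, rfl⟩ := hG.bijOn.surjOn (Set.mem_univ u)
  obtain ⟨b, hb, rfl⟩ := hG.bijOn.surjOn (Set.mem_univ v)
  rcases lt_trichotomy a b with hab | rfl | hab
  · exact hlt a b hab hb
  · exact absurd rfl huv
  · exact (hlt b a hab ha).symm

lemma rc2_le (hG : IsEaredCycle G m w) (hm : 2 ≤ m) : rc2 G ≤ m + 1 := by
  refine rc2_le_of_natColouring (hG.rainbowTwoConnectedColouring hm) fun e he => ?_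
  rw [hG.edgeSet_eq] at he
  obtain ⟨e, he, rfl⟩ := he
  induction e using Sym2.ind with | h a b => ?_
  have hle := le_of_mem_earEdges he
  rw [Sym2.map_mk, hG.earColouring_mk (hle a (by simp)) (hle b (by simp))]
  exact Nat.lt_succ_of_le (earColour_le hm he)

lemma exists_hub_avoiding (hG : IsEaredCycle G m w) {r : ℕ} (hr : r ≤ m + 1) :
    ∃ h ≤ m + 1, h ≠ r ∧ ∀ t ≤ m + 1, t ≠ r → ∃ (p : G.Walk (w h) (w t)) (L : List ℕ),
      p.support = L.map w ∧ ∀ s ∈ L, s ≤ m + 1 ∧ s ≠ r := by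
  rcases (by omega : r = m + 1 ∨ r = 0 ∨ 1 ≤ r ∧ r ≤ m) with rfl | rfl | ⟨hr₁, hrm⟩
  · refine ⟨0, by omega, by omega, fun t ht htr =>
      ⟨hG.arc 0 t t.zero_le (by omega), _, hG.support_arc _ _, ?_⟩⟩
    simp
    omega
  · refine ⟨1, by omega, by omega, fun t ht htr => ?_⟩
    rcases ht.lt_or_eq with ht | rfl
    · refine ⟨hG.arc 1 t (by omega) (by omega), _, hG.support_arc _ _, ?_⟩
      simp
      omega
    · exact ⟨hG.adj_apex_one.symm.toWalk, [1, m + 1], rfl, by simp⟩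
  · refine ⟨0, by omega, by omega, fun t ht htr => ?_⟩
    rcases (by omega : t < r ∨ r < t ∧ t ≤ m ∨ t = m + 1) with htr | ⟨hrt, htm⟩ | rfl
    · refine ⟨hG.arc 0 t t.zero_le (by omega), _, hG.support_arc _ _, ?_⟩
      simp
      omega
    · refine ⟨.cons hG.adj_last_zero.symm (hG.arc t m htm le_rfl).reverse,
        0 :: (List.range' t (m - t + 1)).reverse, ?_, ?_⟩
      · simp only [Walk.support_cons, Walk.support_reverse, hG.support_arc, List.map_cons,
          List.map_reverse]
      · simp
        grind
    · exact ⟨hG.adj_apex_zero.symm.toWalk, [0, m + 1], rfl, by simp; omega⟩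

lemma induce_compl_singleton_connected (hG : IsEaredCycle G m w) (u : V) :
    (G.induce {u}ᶜ).Connected := by
  obtain ⟨r, hr, rfl⟩ := hG.bijOn.surjOn (Set.mem_univ u)
  obtain ⟨h, hh, hhr, hwalk⟩ := hG.exists_hub_avoiding hr
  refine induce_connected_of_walks (u := w h) (fun h' => hhr (hG.bijOn.injOn hh hr h'))
    fun z hz => ?_
  obtain ⟨t, ht, rfl⟩ := hG.bijOn.surjOn (Set.mem_univ z)
  have htr : t ≠ r := by rintro rfl; exact hz rfl
  obtain ⟨p, L, hp, hL⟩ := hwalk t ht htr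
  exact ⟨p, hp ▸ ne_of_mem_map_of_injOn hG.bijOn.injOn hL hr⟩

end IsEaredCycle

lemma isEaredCycle_update [Fintype V] {m : ℕ} (hm : 1 ≤ m) (hcard : Fintype.card V = m + 2)
    {x : V} {v : ℕ → V} (hv : ∀ i j, i ≤ m → j ≤ m → v i = v j → i = j) (hxv : ∀ i, i ≤ m → x ≠ v i)
    (hadj : ∀ a b : V, G.Adj a b ↔
      ((∃ i, i + 1 ≤ m ∧ ({a, b} : Set V) = {v i, v (i + 1)}) ∨
       ({a, b} : Set V) = {v m, v 0} ∨
       ({a, b} : Set V) = {x, v 0} ∨ ({a, b} : Set V) = {x, v 1})) :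
    IsEaredCycle G m (Function.update v (m + 1) x) := by
  have hw : ∀ t ≤ m, Function.update v (m + 1) x t = v t := fun t ht =>
    Function.update_of_ne (by omega) _ _
  have hinj : Set.InjOn (Function.update v (m + 1) x) (Set.Iic (m + 1)) := by
    intro i hi j hj h
    rw [Set.mem_Iic] at hi hj
    rcases (by omega : i = m + 1 ∨ i ≤ m) with rfl | hi <;>
      rcases (by omega : j = m + 1 ∨ j ≤ m) with rfl | hj
    · rfl
    · rw [Function.update_self, hw j hj] at h
      exact absurd h (hxv j hj)
    · rw [Function.update_self, hw i hi] at h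
      exact absurd h.symm (hxv i hi)
    · rw [hw i hi, hw j hj] at h
      exact hv i j hi hj h
  refine ⟨⟨Set.mapsTo_univ _ _, hinj, hinj.surjOn_univ_of_card hcard⟩, ?_⟩
  ext e
  induction e using Sym2.ind with | h a b => ?_
  rw [mem_edgeSet, hadj, mem_map_earEdges_iff]
  simp only [Set.pair_eq_pair_iff, ← Sym2.eq_iff, Function.update_self, hw 0 (by omega),
    hw 1 hm, hw m le_rfl]
  exact or_congr_left (exists_congr fun k => and_congr_right fun hk : k + 1 ≤ m => by
    rw [hw k (by omega), hw (k + 1) hk])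

end

/-- For n ≥ 4, the graph obtained from a cycle v₀v₁⋯v₍n₋₂₎v₀ on
n − 1 vertices by adding a new vertex x joined to v₀ and v₁ is 2-connected,
has n + 1 edges, and satisfies rc₂ ≤ n − 1. -/
theorem stmt9 (n : ℕ) (hn : 4 ≤ n) {V : Type*} [Fintype V] (hcard : Fintype.card V = n)
    (x : V) (v : ℕ → V)
    (hvinj : ∀ i j, i ≤ n - 2 → j ≤ n - 2 → v i = v j → i = j)
    (hxv : ∀ i, i ≤ n - 2 → x ≠ v i)
    (G : SimpleGraph V)
    (hadj : ∀ a b : V, G.Adj a b ↔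
      ((∃ i, i + 1 ≤ n - 2 ∧ ({a, b} : Set V) = {v i, v (i + 1)}) ∨
       ({a, b} : Set V) = {v (n - 2), v 0} ∨
       ({a, b} : Set V) = {x, v 0} ∨ ({a, b} : Set V) = {x, v 1})) :
    TwoConnected G ∧ G.edgeSet.ncard = n + 1 ∧ rc2 G ≤ n - 1 := by
  have hG := isEaredCycle_update (m := n - 2) (by omega) (by omega) hvinj hxv hadj
  refine ⟨⟨by omega, hG.induce_compl_singleton_connected⟩, ?_, ?_⟩
  · rw [hG.ncard_edgeSet (by omega)]
    omega
  · exact (hG.rc2_le (by omega)).trans_eq (by omega)
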